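/- For integers $0 \le t \le k-1$, as $x \to 1^+$ one has $Q_{k,t}(x) = \log\left(\frac{x+1}{x-1}\right) - \left(\psi(k+t) - \psi(1) + \psi(k-t) - \psi(1)\right) + o(1)$, where $\psi = \Gamma'/\Gamma$ is the digamma function. -/

import Mathlib

/-!
Put `a = k - t - 1`, `b = k + t - 1`, `r = (1 - u)/(x - u) ∈ [0, 1]` and `y = (1 + u)/2`.
Since `2^{-a}(1 + u)^a = y^a = 1 - (1 - u) q(u)` with `q = ½ ∑_{m<a} y^m`, the integrand of
`Q_{k,t}` equals `r^b/(x - u) - q(u) r^{b+1}`. The first part integrates in closed form to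
`log((x+1)/(x-1)) - ∑_{m<b} (2/(x+1))^{m+1}/(m+1)`, and `∑_{m<b} 1/(m+1) = H_b`. In the second
part `r → 1` boundedly as `x → 1⁺`, so by dominated convergence its integral tends to `∫ q = H_a`.
-/

open MeasureTheory

/-- `Q_{k,t}(x) = 2^{-k+t+1} ∫_{-1}^1 (1+u)^{k-t-1}(1-u)^{k+t-1}/(x-u)^{k+t} du`, for `x > 1`. -/
noncomputable def Qkt (k t : ℕ) (x : ℝ) : ℝ :=
  (2 : ℝ) ^ ((t : ℤ) + 1 - (k : ℤ)) *
    ∫ u in (-1 : ℝ)..1, (1 + u) ^ (k - t - 1) * (1 - u) ^ (k + t - 1) / (x - u) ^ (k + t)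

open Filter Topology Finset intervalIntegral

namespace Qkt

lemma sum_range_one_div_succ (n : ℕ) :
    ∑ m ∈ range n, 1 / ((m : ℝ) + 1) = ∑ j ∈ Icc 1 n, 1 / (j : ℝ) := by
  induction n with
  | zero => simp
  | succ n ih => rw [sum_range_succ, ih, sum_Icc_succ_top (by omega)]; push_cast; rfl

noncomputable def ratio (x u : ℝ) : ℝ := (1 - u) / (x - u)

variable {x : ℝ}

lemma sub_ne_zero_of_mem_uIcc (hx : 1 < x) {u : ℝ} (hu : u ∈ Set.uIcc (-1 : ℝ) 1) : x - u ≠ 0 := by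
  rw [Set.uIcc_of_le (by norm_num)] at hu
  linarith [hu.2]

lemma ratio_mem_Icc (hx : 1 < x) {u : ℝ} (hu : u ≤ 1) : ratio x u ∈ Set.Icc 0 1 := by
  have : 0 < x - u := by linarith
  exact ⟨div_nonneg (by linarith) this.le, (div_le_one this).2 (by linarith)⟩

lemma hasDerivAt_ratio {u : ℝ} (hxu : x - u ≠ 0) :
    HasDerivAt (ratio x) (-(x - 1) / (x - u) ^ 2) u := by
  have := ((hasDerivAt_id u).const_sub 1).div ((hasDerivAt_id u).const_sub x) hxu
  exact this.congr_deriv (by simp only [id]; ring)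

lemma tendsto_ratio {u : ℝ} (hu : u ≠ 1) : Tendsto (ratio · u) (𝓝[>] 1) (𝓝 1) := by
  have hu' : (1 : ℝ) - u ≠ 0 := sub_ne_zero.2 hu.symm
  have : ContinuousAt (ratio · u) 1 := by unfold ratio; fun_prop (disch := exact hu')
  simpa [ratio, hu'] using this.tendsto.mono_left nhdsWithin_le_nhds

lemma continuousOn_ratio (hx : 1 < x) : ContinuousOn (ratio x) (Set.uIcc (-1) 1) :=
  (continuousOn_const.sub continuousOn_id).div (continuousOn_const.sub continuousOn_id)
    fun _ hu => sub_ne_zero_of_mem_uIcc hx hu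

lemma intervalIntegrable_ratio_pow_div (hx : 1 < x) (n : ℕ) :
    IntervalIntegrable (fun u => ratio x u ^ n / (x - u)) volume (-1) 1 :=
  (((continuousOn_ratio hx).pow n).div (continuousOn_const.sub continuousOn_id)
    fun _ hu => sub_ne_zero_of_mem_uIcc hx hu).intervalIntegrable

/-- The antiderivative is `∑_{m<n} r^{m+1}/(m+1) - log (x - u)`, because
`r^n/(x-u) = 1/(x-u) + r' ∑_{m<n} r^m` with `r' = -(1-r)/(x-u)`. -/
lemma integral_ratio_pow_div (hx : 1 < x) (n : ℕ) :
    ∫ u in (-1 : ℝ)..1, ratio x u ^ n / (x - u) =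
      Real.log ((x + 1) / (x - 1)) - ∑ m ∈ range n, (2 / (x + 1)) ^ (m + 1) / (m + 1) := by
  set F : ℝ → ℝ := fun u => ∑ m ∈ range n, ratio x u ^ (m + 1) / (m + 1) - Real.log (x - u)
  have hF : ∀ u ∈ Set.uIcc (-1 : ℝ) 1, HasDerivAt F (ratio x u ^ n / (x - u)) u := by
    intro u hu
    have hxu := sub_ne_zero_of_mem_uIcc hx hu
    have hsum := HasDerivAt.fun_sum fun m (_ : m ∈ range n) =>
      ((hasDerivAt_ratio hxu).pow (m + 1)).div_const ((m : ℝ) + 1)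
    have hlog := ((hasDerivAt_id u).const_sub x).log hxu
    refine (hsum.sub hlog).congr_deriv ?_
    have hgeom := geom_sum_mul (ratio x u) n
    have hderiv : -(x - 1) / (x - u) ^ 2 = (ratio x u - 1) / (x - u) := by
      unfold ratio; field_simp; ring
    simp only [id, Nat.cast_add, Nat.cast_one, add_tsub_cancel_right, hderiv]
    have hcancel : ∀ m ∈ range n, ((m : ℝ) + 1) * ratio x u ^ m * ((ratio x u - 1) / (x - u)) /
        ((m : ℝ) + 1) = ratio x u ^ m * ((ratio x u - 1) / (x - u)) := fun m _ => by field_simp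
    rw [sum_congr rfl hcancel, ← sum_mul, ← mul_div_assoc, hgeom]
    ring
  rw [integral_eq_sub_of_hasDerivAt hF (intervalIntegrable_ratio_pow_div hx n)]
  simp only [F, ratio]
  norm_num
  rw [Real.log_div (by linarith) (by linarith)]
  ring

lemma integral_half_pow (m : ℕ) : ∫ u in (-1 : ℝ)..1, ((1 + u) / 2) ^ m / 2 = 1 / (m + 1) := by
  have hF : ∀ u ∈ Set.uIcc (-1 : ℝ) 1,
      HasDerivAt (fun u => ((1 + u) / 2) ^ (m + 1) / ((m : ℝ) + 1)) (((1 + u) / 2) ^ m / 2) u := by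
    intro u _
    refine ((((hasDerivAt_id u).const_add 1).div_const 2).pow (m + 1)).div_const _ |>.congr_deriv ?_
    field_simp
    simp
  rw [integral_eq_sub_of_hasDerivAt hF (Continuous.intervalIntegrable (by fun_prop) _ _)]
  norm_num

lemma tendsto_integral_mul_ratio_pow {g : ℝ → ℝ} (hg : IntervalIntegrable g volume (-1) 1)
    (n : ℕ) :
    Tendsto (fun x => ∫ u in (-1 : ℝ)..1, g u * ratio x u ^ n) (𝓝[>] 1)
      (𝓝 (∫ u in (-1 : ℝ)..1, g u)) := by
  have hmeas : ∀ x, AEStronglyMeasurable (fun u => g u * ratio x u ^ n)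
      (volume.restrict (Set.uIoc (-1) 1)) := fun x =>
    hg.def'.aestronglyMeasurable.mul
      (((measurable_const.sub measurable_id).div (measurable_const.sub measurable_id)).pow_const n
        |>.aestronglyMeasurable)
  have hbound : ∀ᶠ x in 𝓝[>] (1 : ℝ), ∀ᵐ u, u ∈ Set.uIoc (-1 : ℝ) 1 →
      ‖g u * ratio x u ^ n‖ ≤ ‖g u‖ := by
    filter_upwards [self_mem_nhdsWithin] with x hx
    refine ae_of_all _ fun u hu => ?_
    rw [Set.uIoc_of_le (by norm_num)] at hu
    obtain ⟨h0, h1⟩ := ratio_mem_Icc hx hu.2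
    rw [norm_mul, norm_pow, Real.norm_of_nonneg h0]
    exact mul_le_of_le_one_right (norm_nonneg _) (pow_le_one₀ h0 h1)
  refine tendsto_integral_filter_of_dominated_convergence _ (.of_forall hmeas) hbound hg.norm ?_
  filter_upwards [Measure.ae_ne volume 1] with u hu _
  simpa using (tendsto_ratio hu).pow n |>.const_mul (g u)

lemma two_zpow_neg_mul_integrand (a b : ℕ) (u : ℝ) :
    (2 : ℝ) ^ (-(a : ℤ)) * ((1 + u) ^ a * (1 - u) ^ b / (x - u) ^ (b + 1)) =
      ratio x u ^ b / (x - u) - (∑ m ∈ range a, ((1 + u) / 2) ^ m / 2) * ratio x u ^ (b + 1) := by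
  have hgeom := geom_sum_mul ((1 + u) / 2) a
  have hpow : (2 : ℝ) ^ (-(a : ℤ)) * (1 + u) ^ a =
      1 - (∑ m ∈ range a, ((1 + u) / 2) ^ m / 2) * (1 - u) := by
    rw [← sum_div, zpow_neg, zpow_natCast]
    rw [div_pow] at hgeom
    linear_combination -hgeom
  have hr : (1 - u) ^ b / (x - u) ^ (b + 1) = ratio x u ^ b / (x - u) := by
    rw [ratio, div_pow, pow_succ, div_div]
  calc (2 : ℝ) ^ (-(a : ℤ)) * ((1 + u) ^ a * (1 - u) ^ b / (x - u) ^ (b + 1))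
      = ((2 : ℝ) ^ (-(a : ℤ)) * (1 + u) ^ a) * ((1 - u) ^ b / (x - u) ^ (b + 1)) := by ring
    _ = _ := by rw [hpow, hr, pow_succ, ratio]; ring

lemma two_zpow_neg_mul_integral (a b : ℕ) (hx : 1 < x) :
    (2 : ℝ) ^ (-(a : ℤ)) * ∫ u in (-1 : ℝ)..1, (1 + u) ^ a * (1 - u) ^ b / (x - u) ^ (b + 1) =
      Real.log ((x + 1) / (x - 1)) - ∑ m ∈ range b, (2 / (x + 1)) ^ (m + 1) / (m + 1) -
        ∫ u in (-1 : ℝ)..1, (∑ m ∈ range a, ((1 + u) / 2) ^ m / 2) * ratio x u ^ (b + 1) := by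
  simp_rw [← intervalIntegral.integral_const_mul, two_zpow_neg_mul_integrand]
  rw [intervalIntegral.integral_sub, integral_ratio_pow_div hx]
  · exact intervalIntegrable_ratio_pow_div hx b
  · exact ((continuous_finsetSum _ fun m _ => by fun_prop).continuousOn.mul
      ((continuousOn_ratio hx).pow (b + 1))).intervalIntegrable

lemma tendsto_integral_sub_log (a b : ℕ) :
    Tendsto (fun x : ℝ =>
        (2 : ℝ) ^ (-(a : ℤ)) * (∫ u in (-1 : ℝ)..1, (1 + u) ^ a * (1 - u) ^ b / (x - u) ^ (b + 1)) -
          Real.log ((x + 1) / (x - 1)) +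
          ((∑ j ∈ Icc 1 b, (1 : ℝ) / j) + ∑ j ∈ Icc 1 a, (1 : ℝ) / j))
      (𝓝[>] 1) (𝓝 0) := by
  set Ha := ∑ j ∈ Icc 1 a, (1 : ℝ) / j
  set Hb := ∑ j ∈ Icc 1 b, (1 : ℝ) / j
  have hsum : Tendsto (fun x : ℝ => ∑ m ∈ range b, (2 / (x + 1)) ^ (m + 1) / (m + 1)) (𝓝[>] 1)
      (𝓝 Hb) := by
    have : ContinuousAt (fun x : ℝ => ∑ m ∈ range b, (2 / (x + 1)) ^ (m + 1) / (m + 1)) 1 := by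
      fun_prop (disch := norm_num)
    convert this.tendsto.mono_left nhdsWithin_le_nhds using 2
    simp only [Hb, ← sum_range_one_div_succ]
    norm_num
  have hint : Tendsto (fun x : ℝ =>
      ∫ u in (-1 : ℝ)..1, (∑ m ∈ range a, ((1 + u) / 2) ^ m / 2) * ratio x u ^ (b + 1))
      (𝓝[>] 1) (𝓝 Ha) := by
    convert tendsto_integral_mul_ratio_pow (g := fun u => ∑ m ∈ range a, ((1 + u) / 2) ^ m / 2)
      (Continuous.intervalIntegrable (by fun_prop) _ _) (b + 1)
    rw [intervalIntegral.integral_finsetSum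
      fun m _ => Continuous.intervalIntegrable (by fun_prop) _ _]
    simp only [integral_half_pow, sum_range_one_div_succ, Ha]
  have hlim := (hsum.neg.sub hint).add_const (Hb + Ha)
  rw [show -Hb - Ha + (Hb + Ha) = 0 by ring] at hlim
  refine hlim.congr' ?_
  filter_upwards [self_mem_nhdsWithin] with x hx
  rw [two_zpow_neg_mul_integral a b hx]
  ring

end Qkt

/-- For `0 ≤ t ≤ k-1`, as `x → 1⁺`,
`Q_{k,t}(x) = log((x+1)/(x-1)) - ((ψ(k+t) - ψ(1)) + (ψ(k-t) - ψ(1))) + o(1)`, where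
`ψ(n) - ψ(1) = Σ_{j=1}^{n-1} 1/j`. -/
theorem statement6 (k t : ℕ) (hk : 1 ≤ k) (ht : t ≤ k - 1) :
    Filter.Tendsto
      (fun x : ℝ => Qkt k t x - Real.log ((x + 1) / (x - 1)) +
        ((∑ j ∈ Finset.Icc 1 (k + t - 1), (1 : ℝ) / j) +
          ∑ j ∈ Finset.Icc 1 (k - t - 1), (1 : ℝ) / j))
      (nhdsWithin 1 (Set.Ioi 1)) (nhds 0) := by
  have hexp : (t : ℤ) + 1 - k = -((k - t - 1 : ℕ) : ℤ) := by omega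
  have hdeg : k + t = k + t - 1 + 1 := by omega
  refine (Qkt.tendsto_integral_sub_log (k - t - 1) (k + t - 1)).congr fun x => ?_
  rw [Qkt, hexp, ← hdeg]
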